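/- For every partizan game G, the misère outcome of G + G° is a previous-player win (P-position): the player to move loses, i.e. neither Left moving first nor Right moving first can win G + G° under misère play. -/

import Mathlib

/-- A (finite) partizan game: finite lists of Left and Right options. -/
inductive Gm : Type where
  | node : List Gm → List Gm → Gm

/-- The Left options of a game. -/
def Gm.leftOpts : Gm → List Gm
  | .node l _ => l

/-- The Right options of a game. -/
def Gm.rightOpts : Gm → List Gm
  | .node _ r => r

/-- Disjunctive sum of games. -/
def Gm.add : Gm → Gm → Gm
  | .node gl gr, .node hl hr =>
      .node
        (gl.attach.map (fun g => Gm.add g.1 (.node hl hr)) ++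
         hl.attach.map (fun h => Gm.add (.node gl gr) h.1))
        (gr.attach.map (fun g => Gm.add g.1 (.node hl hr)) ++
         hr.attach.map (fun h => Gm.add (.node gl gr) h.1))
termination_by g h => sizeOf g + sizeOf h
decreasing_by
  all_goals first
  | (have := List.sizeOf_lt_of_mem g.2; simp; omega)
  | (have := List.sizeOf_lt_of_mem h.2; simp; omega)

mutual
/-- Left, moving first, wins `G` under misère play (a player unable to move wins):
`G` is a Left end, or some Left option is a loss for Right moving first. -/
def Gm.lwins : Gm → Prop
  | .node l _ => l = [] ∨ ∃ g ∈ l.attach, ¬ Gm.rwins g.1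
termination_by G => sizeOf G
decreasing_by have := List.sizeOf_lt_of_mem g.2; simp; omega

/-- Right, moving first, wins `G` under misère play. -/
def Gm.rwins : Gm → Prop
  | .node _ r => r = [] ∨ ∃ g ∈ r.attach, ¬ Gm.lwins g.1
termination_by G => sizeOf G
decreasing_by have := List.sizeOf_lt_of_mem g.2; simp; omega
end

/-- The game `0`. -/
def Gm.zero : Gm := .node [] []

/-- The game `* = {0|0}`. -/
def Gm.star : Gm := .node [Gm.zero] [Gm.zero]

/-- The misère adjoint `G°`. -/
def Gm.adj : Gm → Gm
  | .node [] [] => Gm.star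
  | .node [] (r :: rs) => .node ((r :: rs).attach.map (fun g => Gm.adj g.1)) [Gm.zero]
  | .node (l :: ls) [] => .node [Gm.zero] ((l :: ls).attach.map (fun g => Gm.adj g.1))
  | .node (l :: ls) (r :: rs) =>
      .node ((r :: rs).attach.map (fun g => Gm.adj g.1))
            ((l :: ls).attach.map (fun g => Gm.adj g.1))
termination_by G => sizeOf G
decreasing_by
  all_goals (have := List.sizeOf_lt_of_mem g.2; simp at this ⊢; omega)

namespace Gm

lemma sizeOf_lt_of_mem_leftOpts {G x : Gm} (h : x ∈ G.leftOpts) : sizeOf x < sizeOf G := by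
  cases G with
  | node l r =>
    have : sizeOf x < sizeOf l := List.sizeOf_lt_of_mem h
    simp only [node.sizeOf_spec]; omega

lemma sizeOf_lt_of_mem_rightOpts {G x : Gm} (h : x ∈ G.rightOpts) : sizeOf x < sizeOf G := by
  cases G with
  | node l r =>
    have : sizeOf x < sizeOf r := List.sizeOf_lt_of_mem h
    simp only [node.sizeOf_spec]; omega

lemma lwins_iff (G : Gm) : G.lwins ↔ G.leftOpts = [] ∨ ∃ x ∈ G.leftOpts, ¬ x.rwins := by
  cases G with | node l r => rw [lwins]; simp [leftOpts]

lemma rwins_iff (G : Gm) : G.rwins ↔ G.rightOpts = [] ∨ ∃ x ∈ G.rightOpts, ¬ x.lwins := by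
  cases G with | node l r => rw [rwins]; simp [rightOpts]

lemma not_lwins_iff (G : Gm) : ¬ G.lwins ↔ G.leftOpts ≠ [] ∧ ∀ x ∈ G.leftOpts, x.rwins := by
  simp [lwins_iff]

lemma not_rwins_iff (G : Gm) : ¬ G.rwins ↔ G.rightOpts ≠ [] ∧ ∀ x ∈ G.rightOpts, x.lwins := by
  simp [rwins_iff]

lemma mem_leftOpts_add {g h x : Gm} :
    x ∈ (g.add h).leftOpts ↔
      (∃ gl ∈ g.leftOpts, x = gl.add h) ∨ ∃ hl ∈ h.leftOpts, x = g.add hl := by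
  cases g; cases h; rw [add]; simp [leftOpts, eq_comm]

lemma mem_rightOpts_add {g h x : Gm} :
    x ∈ (g.add h).rightOpts ↔
      (∃ gr ∈ g.rightOpts, x = gr.add h) ∨ ∃ hr ∈ h.rightOpts, x = g.add hr := by
  cases g; cases h; rw [add]; simp [rightOpts, eq_comm]

lemma leftOpts_add_eq_nil {g h : Gm} :
    (g.add h).leftOpts = [] ↔ g.leftOpts = [] ∧ h.leftOpts = [] := by
  cases g; cases h; rw [add]; simp [leftOpts]

lemma rightOpts_add_eq_nil {g h : Gm} :
    (g.add h).rightOpts = [] ↔ g.rightOpts = [] ∧ h.rightOpts = [] := by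
  cases g; cases h; rw [add]; simp [rightOpts]

lemma mem_leftOpts_adj {G x : Gm} :
    x ∈ G.adj.leftOpts ↔ (G.rightOpts = [] ∧ x = zero) ∨ ∃ gr ∈ G.rightOpts, x = gr.adj := by
  rcases G with ⟨_ | ⟨l, ls⟩, _ | ⟨r, rs⟩⟩ <;> rw [adj] <;> simp [leftOpts, rightOpts, star, eq_comm]

lemma mem_rightOpts_adj {G x : Gm} :
    x ∈ G.adj.rightOpts ↔ (G.leftOpts = [] ∧ x = zero) ∨ ∃ gl ∈ G.leftOpts, x = gl.adj := by
  rcases G with ⟨_ | ⟨l, ls⟩, _ | ⟨r, rs⟩⟩ <;> rw [adj] <;> simp [leftOpts, rightOpts, star, eq_comm]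

lemma leftOpts_adj_ne_nil (G : Gm) : G.adj.leftOpts ≠ [] := by
  rcases G with ⟨_ | ⟨l, ls⟩, _ | ⟨r, rs⟩⟩ <;> rw [adj] <;> simp [leftOpts, star]

lemma rightOpts_adj_ne_nil (G : Gm) : G.adj.rightOpts ≠ [] := by
  rcases G with ⟨_ | ⟨l, ls⟩, _ | ⟨r, rs⟩⟩ <;> rw [adj] <;> simp [rightOpts, star]

/-- Right answers every Left move in `G + G°` by the mirror move in the other component, reaching
some `H + H°` with `H` an option of `G`; when Left moves `G°` to the `0` of a Right end `G`,
Right is left with no move and wins. -/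
theorem not_lwins_add_adj (G : Gm) : ¬ (G.add G.adj).lwins := by
  rw [not_lwins_iff, Ne, leftOpts_add_eq_nil, not_and_or]
  refine ⟨.inr (leftOpts_adj_ne_nil G), fun x hx => ?_⟩
  rw [rwins_iff]
  rcases mem_leftOpts_add.1 hx with ⟨gl, hgl, rfl⟩ | ⟨a, ha, rfl⟩
  · have := sizeOf_lt_of_mem_leftOpts hgl
    refine .inr ⟨gl.add gl.adj, mem_rightOpts_add.2 (.inr ⟨gl.adj, ?_, rfl⟩), not_lwins_add_adj gl⟩
    exact mem_rightOpts_adj.2 (.inr ⟨gl, hgl, rfl⟩)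
  · rcases mem_leftOpts_adj.1 ha with ⟨hG, rfl⟩ | ⟨gr, hgr, rfl⟩
    · exact .inl (rightOpts_add_eq_nil.2 ⟨hG, rfl⟩)
    · have := sizeOf_lt_of_mem_rightOpts hgr
      exact .inr ⟨gr.add gr.adj, mem_rightOpts_add.2 (.inl ⟨gr, hgr, rfl⟩), not_lwins_add_adj gr⟩
termination_by sizeOf G

theorem not_rwins_add_adj (G : Gm) : ¬ (G.add G.adj).rwins := by
  rw [not_rwins_iff, Ne, rightOpts_add_eq_nil, not_and_or]
  refine ⟨.inr (rightOpts_adj_ne_nil G), fun x hx => ?_⟩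
  rw [lwins_iff]
  rcases mem_rightOpts_add.1 hx with ⟨gr, hgr, rfl⟩ | ⟨a, ha, rfl⟩
  · have := sizeOf_lt_of_mem_rightOpts hgr
    refine .inr ⟨gr.add gr.adj, mem_leftOpts_add.2 (.inr ⟨gr.adj, ?_, rfl⟩), not_rwins_add_adj gr⟩
    exact mem_leftOpts_adj.2 (.inr ⟨gr, hgr, rfl⟩)
  · rcases mem_rightOpts_adj.1 ha with ⟨hG, rfl⟩ | ⟨gl, hgl, rfl⟩
    · exact .inl (leftOpts_add_eq_nil.2 ⟨hG, rfl⟩)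
    · have := sizeOf_lt_of_mem_leftOpts hgl
      exact .inr ⟨gl.add gl.adj, mem_leftOpts_add.2 (.inl ⟨gl, hgl, rfl⟩), not_rwins_add_adj gl⟩
termination_by sizeOf G

end Gm

/-- `G + G°` is a misère P-position: the player to move loses. -/
theorem stmt11 (G : Gm) :
    ¬ Gm.lwins (G.add G.adj) ∧ ¬ Gm.rwins (G.add G.adj) :=
  ⟨G.not_lwins_add_adj, G.not_rwins_add_adj⟩
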